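/- For a Cantor set X ⊂ ℂ^N (compact, totally disconnected, perfect metric space), the generalized argument principle for X is equivalent to the equality of the polynomial and rational hulls of X. -/

import Mathlib

/-!
On a compact totally disconnected space every zero-free continuous function `F` has a continuous
logarithm: refine the cover by balls `B(F x, |F x|)` to a finite clopen partition, and on the piece
with centre `x` take `log (F x) + log (F / F x)`, the second logarithm being the principal one on
the half plane `Re > 0`. So for such `X` the generalized argument principle says exactly that every
polynomial zero-free on `X` is zero-free on the polynomial hull, i.e. `polyHull ⊆ ratHull`. The
reverse inclusion holds for every compact `X`: for `z ∈ ratHull`, `p - p z` has a zero `x ∈ X`,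
so `|p z| = |p x|`.
-/

open MvPolynomial

/-- The polynomial hull of a set `X ⊆ ℂ^N`. -/
def polyHull (N : ℕ) (X : Set (Fin N → ℂ)) : Set (Fin N → ℂ) :=
  {z | ∀ p : MvPolynomial (Fin N) ℂ,
    ‖eval z p‖ ≤ sSup ((fun x => ‖eval x p‖) '' X)}

/-- `X` satisfies the generalized argument principle: every polynomial having a
continuous logarithm on `X` has no zeros on the polynomial hull of `X`. -/
def GenArgPrinciple (N : ℕ) (X : Set (Fin N → ℂ)) : Prop :=
  ∀ p : MvPolynomial (Fin N) ℂ,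
    (∃ g : (Fin N → ℂ) → ℂ, ContinuousOn g X ∧ ∀ x ∈ X, eval x p = Complex.exp (g x)) →
    ∀ z ∈ polyHull N X, eval z p ≠ 0

/-- `Y` is simply coconnected: every zero-free continuous function on `Y` has a
continuous logarithm. -/
def SimplyCoconnected (N : ℕ) (Y : Set (Fin N → ℂ)) : Prop :=
  ∀ f : (Fin N → ℂ) → ℂ, ContinuousOn f Y → (∀ y ∈ Y, f y ≠ 0) →
    ∃ g : (Fin N → ℂ) → ℂ, ContinuousOn g Y ∧ ∀ y ∈ Y, f y = Complex.exp (g y)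

/-- The rational hull of a set `X ⊆ ℂ^N`:
`{z | every polynomial vanishing at z has a zero on X}`. -/
def ratHull (N : ℕ) (X : Set (Fin N → ℂ)) : Set (Fin N → ℂ) :=
  {z | ∀ p : MvPolynomial (Fin N) ℂ, eval z p = 0 → ∃ x ∈ X, eval x p = 0}

open Set Topology

section TotallyDisconnected

variable {Y : Type*} [TopologicalSpace Y] [CompactSpace Y] [T2Space Y] [TotallyDisconnectedSpace Y]

theorem exists_isLocallyConstant_forall_mem {U : Y → Set Y} (hU : ∀ y, IsOpen (U y))
    (hmem : ∀ y, y ∈ U y) : ∃ k : Y → Y, IsLocallyConstant k ∧ ∀ y, y ∈ U (k y) := by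
  choose V hV_clopen hV_mem hV_sub using fun x => compact_exists_isClopen_in_isOpen (hU x) (hmem x)
  obtain ⟨t, ht⟩ := isCompact_univ.elim_finite_subcover V (fun x => (hV_clopen x).isOpen)
    fun y _ => mem_iUnion.2 ⟨y, hV_mem y⟩
  obtain ⟨C, hC_clopen, -, hC_sub, hC_cover, hC_disj⟩ :=
    exists_clopen_partition_of_clopen_cover (Z := fun _ : t => ∅) (D := fun i => V i)
      (fun _ => isClosed_empty) (fun i => hV_clopen i) (fun _ => empty_subset _)
      (fun _ _ _ _ _ => disjoint_bot_left)
  have hC_mem : ∀ y, ∃ i, y ∈ C i := fun y => by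
    obtain ⟨x, hx, hyx⟩ := mem_iUnion₂.1 (ht (mem_univ y))
    exact mem_iUnion.1 (hC_cover (mem_iUnion.2 ⟨⟨x, hx⟩, hyx⟩))
  choose i hi using hC_mem
  refine ⟨fun y => i y, (IsLocallyConstant.iff_eventually_eq _).2 fun y => ?_,
    fun y => hV_sub _ (hC_sub _ (hi y))⟩
  filter_upwards [(hC_clopen (i y)).isOpen.mem_nhds (hi y)] with y' hy'
  by_contra hne
  exact disjoint_left.1 (hC_disj (mem_univ _) (mem_univ _) fun h => hne (congrArg _ h)) (hi y') hy'

theorem exists_continuous_exp_eq {F : Y → ℂ} (hF : Continuous F) (hF0 : ∀ y, F y ≠ 0) :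
    ∃ G : Y → ℂ, Continuous G ∧ ∀ y, F y = Complex.exp (G y) := by
  obtain ⟨k, hk, hFk⟩ := exists_isLocallyConstant_forall_mem
    (U := fun x => F ⁻¹' Metric.ball (F x) ‖F x‖) (fun x => Metric.isOpen_ball.preimage hF)
    (fun x => by simpa using hF0 x)
  have hc0 : ∀ y, F (k y) ≠ 0 := fun y => by simpa using hF0 (k y)
  have hslit : ∀ y, F y / F (k y) ∈ Complex.slitPlane := fun y => by
    refine Complex.ball_one_subset_slitPlane ?_
    have := hFk y
    simp only [mem_preimage, Metric.mem_ball, dist_eq_norm] at this ⊢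
    rwa [← div_self (hc0 y), ← sub_div, norm_div, div_lt_one (norm_pos_iff.2 (hc0 y))]
  refine ⟨fun y => Complex.log (F (k y)) + Complex.log (F y / F (k y)), ?_, fun y => ?_⟩
  · exact (hk.comp fun x => Complex.log (F x)).continuous.add
      ((hF.div (hF.comp hk.continuous) hc0).clog hslit)
  · rw [Complex.exp_add, Complex.exp_log (hc0 y), Complex.exp_log (div_ne_zero (hF0 y) (hc0 y)),
      mul_div_cancel₀ _ (hc0 y)]

end TotallyDisconnected

theorem IsCompact.exists_continuousOn_exp_eq {E : Type*} [TopologicalSpace E] [T2Space E]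
    {X : Set E} (hX : IsCompact X) (htd : IsTotallyDisconnected X) {f : E → ℂ}
    (hf : ContinuousOn f X) (hf0 : ∀ y ∈ X, f y ≠ 0) :
    ∃ g : E → ℂ, ContinuousOn g X ∧ ∀ y ∈ X, f y = Complex.exp (g y) := by
  classical
  have : CompactSpace X := isCompact_iff_compactSpace.1 hX
  have : TotallyDisconnectedSpace X := totallyDisconnectedSpace_subtype_iff.2 htd
  obtain ⟨G, hG, hGf⟩ := exists_continuous_exp_eq (continuousOn_iff_continuous_domRestrict.1 hf)
    fun y => hf0 y y.2
  refine ⟨fun z => if hz : z ∈ X then G ⟨z, hz⟩ else 0, ?_,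
    fun y hy => by simpa [hy] using hGf ⟨y, hy⟩⟩
  rw [continuousOn_iff_continuous_domRestrict]
  convert hG with y
  simp

theorem IsCompact.simplyCoconnected {N : ℕ} {X : Set (Fin N → ℂ)} (hX : IsCompact X)
    (htd : IsTotallyDisconnected X) : SimplyCoconnected N X :=
  fun _ hf hf0 => hX.exists_continuousOn_exp_eq htd hf hf0

theorem ratHull_subset_polyHull {N : ℕ} {X : Set (Fin N → ℂ)} (hX : IsCompact X) :
    ratHull N X ⊆ polyHull N X := by
  intro z hz p
  obtain ⟨x, hxX, hx⟩ := hz (p - C (eval z p)) (by simp)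
  rw [map_sub, eval_C, sub_eq_zero] at hx
  rw [← hx]
  exact le_csSup (hX.bddAbove_image (continuous_eval p).norm.continuousOn) ⟨x, hxX, rfl⟩

theorem polyHull_subset_ratHull {N : ℕ} {X : Set (Fin N → ℂ)} (hsc : SimplyCoconnected N X)
    (h : GenArgPrinciple N X) : polyHull N X ⊆ ratHull N X := by
  intro z hz p hpz
  by_contra! hp
  exact h p (hsc _ (continuous_eval p).continuousOn hp) z hz hpz

theorem genArgPrinciple_of_polyHull_subset_ratHull {N : ℕ} {X : Set (Fin N → ℂ)}
    (h : polyHull N X ⊆ ratHull N X) : GenArgPrinciple N X := by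
  rintro p ⟨g, -, hg⟩ z hz hpz
  obtain ⟨x, hxX, hx⟩ := h hz p hpz
  exact Complex.exp_ne_zero (g x) (hg x hxX ▸ hx)

/-- For a compact, totally disconnected set `X ⊆ ℂ^N` (e.g. a Cantor set), the
generalized argument principle for `X` holds if and only if the polynomial and
rational hulls of `X` coincide. -/
theorem stmt17 (N : ℕ) (X : Set (Fin N → ℂ)) (hX : IsCompact X)
    (htd : IsTotallyDisconnected X) :
    GenArgPrinciple N X ↔ polyHull N X = ratHull N X := by
  refine ⟨fun h => (polyHull_subset_ratHull (hX.simplyCoconnected htd) h).antisymm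
    (ratHull_subset_polyHull hX), fun h => genArgPrinciple_of_polyHull_subset_ratHull h.subset⟩
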